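/- Let g ≥ 2 and 1 ≤ g' < g, and let π_g = ⟨a_1, b_1, …, a_g, b_g | [a_1,b_1]⋯[a_g,b_g]⟩ be the fundamental group of the closed orientable surface of genus g. Then the element x = [a_1,b_1][a_2,b_2]⋯[a_{g'},b_{g'}] does not lie in the third term γ_3(π_g) of the lower central series of π_g; in particular x ≠ 1. -/

import Mathlib

open scoped commutatorElement

/-- The single relator `[a_1,b_1][a_2,b_2]⋯[a_g,b_g]` of the genus `g` surface group,
where the generator `(i, false)` plays the role of `a_{i+1}` and `(i, true)` that of
`b_{i+1}`. -/
def surfaceRels (g : ℕ) : Set (FreeGroup (Fin g × Bool)) :=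
  {(List.ofFn (fun i : Fin g =>
      ⁅FreeGroup.of (i, false), FreeGroup.of (i, true)⁆)).prod}

/-- The fundamental group of the closed orientable surface of genus `g`, presented as
`⟨a_1, b_1, …, a_g, b_g | [a_1,b_1][a_2,b_2]⋯[a_g,b_g]⟩`. -/
abbrev SurfaceGroup (g : ℕ) : Type :=
  PresentedGroup (surfaceRels g)

/-- The generator `a_{i+1}` (if `c = false`) or `b_{i+1}` (if `c = true`) of the genus `g`
surface group. -/
def surfaceGen {g : ℕ} (i : Fin g) (c : Bool) : SurfaceGroup g :=
  PresentedGroup.of (i, c)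

/-!
Map `π_g` to the integral Heisenberg group by `a_i ↦ X`, `b_i ↦ Y ^ e_i` with
`e = (1, …, 1, -g', 0, …, 0)` (`g'` ones). Since `[X, Y ^ t] = Z ^ t` with `Z` central, the
relator goes to `Z ^ (∑ e_i) = 1`, so this is a homomorphism, and `x` goes to `Z ^ g' ≠ 1`.
The Heisenberg group has class 2, so `γ_3` maps to `1` and `x ∉ γ_3(π_g)`.
-/

lemma MonoidHom.map_mem_lowerCentralSeries {G H : Type*} [Group G] [Group H] (φ : G →* H)
    {x : G} {n : ℕ} (hx : x ∈ (⊤ : Subgroup G).lowerCentralSeries n) :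
    φ x ∈ (⊤ : Subgroup H).lowerCentralSeries n := by
  have hmap : φ x ∈ ((⊤ : Subgroup G).map φ).lowerCentralSeries n := by
    rw [← Subgroup.map_lowerCentralSeries]
    exact Subgroup.mem_map_of_mem φ hx
  exact Subgroup.lowerCentralSeries_mono n le_top hmap

@[ext]
structure Heisenberg (R : Type*) where
  a : R
  b : R
  c : R

namespace Heisenberg

variable {R : Type*} [CommRing R]

/- `⟨a, b, c⟩` is the unitriangular matrix `[[1, a, c], [0, 1, b], [0, 0, 1]]`. -/
instance : Mul (Heisenberg R) := ⟨fun x y => ⟨x.a + y.a, x.b + y.b, x.c + y.c + x.a * y.b⟩⟩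
instance : One (Heisenberg R) := ⟨⟨0, 0, 0⟩⟩
instance : Inv (Heisenberg R) := ⟨fun x => ⟨-x.a, -x.b, -x.c + x.a * x.b⟩⟩

@[simp] lemma mul_a (x y : Heisenberg R) : (x * y).a = x.a + y.a := rfl
@[simp] lemma mul_b (x y : Heisenberg R) : (x * y).b = x.b + y.b := rfl
@[simp] lemma mul_c (x y : Heisenberg R) : (x * y).c = x.c + y.c + x.a * y.b := rfl
@[simp] lemma one_a : (1 : Heisenberg R).a = 0 := rfl
@[simp] lemma one_b : (1 : Heisenberg R).b = 0 := rfl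
@[simp] lemma one_c : (1 : Heisenberg R).c = 0 := rfl
@[simp] lemma inv_a (x : Heisenberg R) : x⁻¹.a = -x.a := rfl
@[simp] lemma inv_b (x : Heisenberg R) : x⁻¹.b = -x.b := rfl
@[simp] lemma inv_c (x : Heisenberg R) : x⁻¹.c = -x.c + x.a * x.b := rfl

instance : Group (Heisenberg R) where
  mul_assoc x y z := by ext <;> simp <;> ring
  one_mul x := by ext <;> simp
  mul_one x := by ext <;> simp
  inv_mul_cancel x := by ext <;> simp

lemma commutator_eq (x y : Heisenberg R) : ⁅x, y⁆ = ⟨0, 0, x.a * y.b - y.a * x.b⟩ := by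
  ext <;> simp [commutatorElement_def]; ring

lemma mem_center_of_a_eq_zero_of_b_eq_zero {z : Heisenberg R} (ha : z.a = 0) (hb : z.b = 0) :
    z ∈ Subgroup.center (Heisenberg R) :=
  Subgroup.mem_center_iff.mpr fun x => by ext <;> simp [ha, hb, add_comm]

theorem lowerCentralSeries_two_eq_bot :
    (⊤ : Subgroup (Heisenberg R)).lowerCentralSeries 2 = ⊥ := by
  refine Subgroup.lowerCentralSeries_succ_eq_bot ⊤ ?_
  rw [Subgroup.top_lowerCentralSeries_one, commutator_def, Subgroup.commutator_le]
  intro x _ y _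
  rw [commutator_eq]
  exact mem_center_of_a_eq_zero_of_b_eq_zero rfl rfl

def central : Multiplicative R →* Heisenberg R where
  toFun t := ⟨0, 0, t.toAdd⟩
  map_one' := rfl
  map_mul' s t := by ext <;> simp

@[simp] lemma central_a (t : Multiplicative R) : (central t).a = 0 := rfl
@[simp] lemma central_b (t : Multiplicative R) : (central t).b = 0 := rfl
@[simp] lemma central_c (t : Multiplicative R) : (central t).c = t.toAdd := rfl

lemma central_injective : Function.Injective (central : Multiplicative R →* Heisenberg R) :=
  fun _ _ h => congrArg Heisenberg.c h

lemma prod_ofFn_commutator {n : ℕ} (e : Fin n → R) :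
    (List.ofFn fun i => ⁅(⟨1, 0, 0⟩ : Heisenberg R), ⟨0, e i, 0⟩⁆).prod =
      central (Multiplicative.ofAdd (∑ i, e i)) := by
  have hcomm : ∀ i, ⁅(⟨1, 0, 0⟩ : Heisenberg R), ⟨0, e i, 0⟩⁆ =
      central (Multiplicative.ofAdd (e i)) := fun i => by
    rw [commutator_eq]; ext <;> simp
  simp only [hcomm]
  rw [← Function.comp_def central, ← List.map_ofFn, ← map_list_prod, List.prod_ofFn, ofAdd_sum]

end Heisenberg

namespace SurfaceGroup

variable {g : ℕ} {H : Type*} [Group H]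

def lift (f : Fin g × Bool → H) (hf : (List.ofFn fun i => ⁅f (i, false), f (i, true)⁆).prod = 1) :
    SurfaceGroup g →* H :=
  PresentedGroup.toGroup (f := f) <| by
    rintro r rfl
    simpa [map_list_prod, List.map_ofFn, Function.comp_def] using hf

@[simp] lemma lift_surfaceGen (f : Fin g × Bool → H)
    (hf : (List.ofFn fun i => ⁅f (i, false), f (i, true)⁆).prod = 1) (i : Fin g) (c : Bool) :
    lift f hf (surfaceGen i c) = f (i, c) :=
  PresentedGroup.toGroup.of _

variable {R : Type*} [CommRing R]

def toHeisenberg (e : Fin g → R) (he : ∑ i, e i = 0) : SurfaceGroup g →* Heisenberg R :=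
  lift (fun p => if p.2 then ⟨0, e p.1, 0⟩ else ⟨1, 0, 0⟩) <| by
    simpa [he] using Heisenberg.prod_ofFn_commutator e

lemma toHeisenberg_prod_ofFn_commutator (e : Fin g → R) (he : ∑ i, e i = 0) {k : ℕ}
    (hk : k ≤ g) :
    toHeisenberg e he (List.ofFn fun i : Fin k =>
        ⁅surfaceGen (Fin.castLE hk i) false, surfaceGen (Fin.castLE hk i) true⁆).prod =
      Heisenberg.central (Multiplicative.ofAdd (∑ i : Fin k, e (Fin.castLE hk i))) := by
  simp only [map_list_prod, List.map_ofFn, Function.comp_def, map_commutatorElement, toHeisenberg,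
    lift_surfaceGen]
  exact Heisenberg.prod_ofFn_commutator _

end SurfaceGroup

def balancedExponent (k i : ℕ) : ℤ :=
  if i < k then 1 else if i = k then -k else 0

lemma sum_range_balancedExponent_of_le {k n : ℕ} (hn : n ≤ k) :
    ∑ i ∈ Finset.range n, balancedExponent k i = n := by
  have hone : ∀ i ∈ Finset.range n, balancedExponent k i = 1 := fun i hi =>
    if_pos ((Finset.mem_range.mp hi).trans_le hn)
  simp [Finset.sum_congr rfl hone]

lemma sum_range_balancedExponent_of_lt {k n : ℕ} (hn : k < n) :
    ∑ i ∈ Finset.range n, balancedExponent k i = 0 := by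
  induction n, hn using Nat.le_induction with
  | base =>
    rw [Finset.sum_range_succ, sum_range_balancedExponent_of_le le_rfl]
    simp [balancedExponent]
  | succ n hkn ih =>
    rw [Finset.sum_range_succ, ih, balancedExponent, if_neg (by omega), if_neg (by omega),
      add_zero]

theorem partial_commutator_product_not_in_gamma3_general (g g' : ℕ)
    (hg'1 : 1 ≤ g') (hg' : g' < g) :
    (List.ofFn (fun i : Fin g' =>
        ⁅surfaceGen (Fin.castLE hg'.le i) false,
          surfaceGen (Fin.castLE hg'.le i) true⁆)).prod
      ∉ Subgroup.lowerCentralSeries (⊤ : Subgroup (SurfaceGroup g)) 2 := by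
  intro hx
  have hsum : ∑ i : Fin g, balancedExponent g' i = 0 := by
    rw [Fin.sum_univ_eq_sum_range (balancedExponent g')]
    exact sum_range_balancedExponent_of_lt hg'
  have hpartial : ∑ i : Fin g', balancedExponent g' (Fin.castLE hg'.le i) = g' := by
    simpa [Fin.sum_univ_eq_sum_range (balancedExponent g')] using
      sum_range_balancedExponent_of_le le_rfl
  have himage := (SurfaceGroup.toHeisenberg _ hsum).map_mem_lowerCentralSeries hx
  rw [Heisenberg.lowerCentralSeries_two_eq_bot, Subgroup.mem_bot,
    SurfaceGroup.toHeisenberg_prod_ofFn_commutator, hpartial,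
    map_eq_one_iff _ Heisenberg.central_injective, ofAdd_eq_one] at himage
  omega

/-- Let `g ≥ 2` and `1 ≤ g' < g`, and let `π_g` be the genus `g` surface
group.  Then `x = [a_1,b_1][a_2,b_2]⋯[a_{g'},b_{g'}]` does not lie in the third term
`γ_3(π_g)` of the lower central series (Mathlib's `lowerCentralSeries _ 2`); in
particular `x ≠ 1`. -/
theorem partial_commutator_product_not_in_gamma3 (g g' : ℕ) (hg : 2 ≤ g)
    (hg'1 : 1 ≤ g') (hg' : g' < g) :
    (List.ofFn (fun i : Fin g' =>
        ⁅surfaceGen (Fin.castLE hg'.le i) false,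
          surfaceGen (Fin.castLE hg'.le i) true⁆)).prod
      ∉ Subgroup.lowerCentralSeries (⊤ : Subgroup (SurfaceGroup g)) 2 :=
  partial_commutator_product_not_in_gamma3_general g g' hg'1 hg'
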